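/- Let n ≥ 3 be an integer, let (ξ, η) ∈ ℝ × ℝ^{n-1} with (ξ, η) ≠ (0, 0), and let ε > 0. Let a ∈ ℝ, u ∈ ℝ^{n-1}, w ∈ ℝ^{n-1}, and let A be a real (n−1)×(n−1) matrix. Assume: (i) a + trace(A) = 0; (ii) ξ·a + ⟨η, u⟩ = 0 and ξ·w + A·η = 0; (iii) for every S ∈ ℝ with |S| < ε and every Y ∈ ℝ^{n-1} with |Y| = 1 and ξ·S + ⟨η, Y⟩ = 0, both S·a + ⟨Y, u⟩ − S²·⟨Y, w⟩ − S·⟨Y, A·Y⟩ = 0 and −S²·a·Y − S·(⟨Y, u⟩ + ⟨Y, w⟩)·Y + S·w + A·Y + (S² − 1)·⟨Y, A·Y⟩·Y = 0. Then a = 0, u = 0, w = 0, and A = 0. -/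

import Mathlib

open scoped RealInnerProductSpace

/-- Action of a matrix on a Euclidean vector: `(mulE A Y) i = ∑ j, A i j * Y j`. -/
noncomputable def mulE {m : ℕ} (A : Matrix (Fin m) (Fin m) ℝ)
    (Y : EuclideanSpace ℝ (Fin m)) : EuclideanSpace ℝ (Fin m) :=
  WithLp.toLp 2 (fun i => ∑ j, A i j * Y j)

/-!
Pairing the vector equation with `Y` and comparing it with the scalar one shows that, on the unit
sphere, the two equations at `(S, Y)` amount to `S ⟪Y, w⟫ = 0`, `⟪Y, u⟫ = S (⟪Y, A Y⟫ - a)` and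
`A Y + S w = ⟪Y, A Y⟫ Y`. At `S = 0`, i.e. for `Y ⊥ η`, this gives `⟪Y, u⟫ = 0`, so `u = 0` as soon
as `a = 0`, by the first gauge condition.

If `η = 0`, every vector is an eigenvector of `A`, so `A` is a trace-free scalar. If `ξ = 0`, every
`S ∈ (-ε, ε)` is admissible for each `Y ⊥ η`; varying `S` gives `w = 0` and `A Y = a Y`, so
`A = a (1 - e eᵀ)` with `e = η / ‖η‖`, and the trace condition gives `a = 0`. Otherwise, tilting an
equatorial `Y₀` slightly towards `±η` produces admissible points with `S ≠ 0`: these force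
`w = 0`, and then `A η = -ξ w = 0` and `A Y₀ = 0`, so `A = 0` and `a = 0`.
-/

open InnerProductSpace

section InnerProductSpace

variable {E : Type*} [NormedAddCommGroup E] [InnerProductSpace ℝ E]

theorem LinearMap.ext_of_unit_orthogonal {F : Type*} [AddCommGroup F] [Module ℝ F]
    {f g : E →ₗ[ℝ] F} {η : E} (hη : f η = g η)
    (horth : ∀ y, ‖y‖ = 1 → ⟪η, y⟫ = 0 → f y = g y) : f = g := by
  refine LinearMap.ext_on_codisjoint (ℝ ∙ η).isCompl_orthogonal.codisjoint
    (LinearMap.eqOn_span' (by simpa using hη)) fun y hy => ?_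
  rw [SetLike.mem_coe, Submodule.mem_orthogonal_singleton_iff_inner_right] at hy
  rcases eq_or_ne y 0 with rfl | hy0
  · simp
  have hunit := horth (‖y‖⁻¹ • y) (norm_smul_inv_norm hy0)
    (by rw [inner_smul_right, hy, mul_zero])
  rw [map_smul, map_smul] at hunit
  exact smul_right_injective F (inv_ne_zero (norm_ne_zero_iff.mpr hy0)) hunit

theorem eq_zero_of_inner_eq_zero_of_unit_orthogonal {v η : E} (hη : ⟪η, v⟫ = 0)
    (horth : ∀ y, ‖y‖ = 1 → ⟪η, y⟫ = 0 → ⟪y, v⟫ = 0) : v = 0 := by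
  have h : innerₛₗ ℝ v = 0 :=
    LinearMap.ext_of_unit_orthogonal (by simpa [real_inner_comm] using hη)
      fun y hy hηy => by simpa [real_inner_comm] using horth y hy hηy
  simpa using congrArg (fun f => f v) h

theorem exists_norm_eq_one_inner_eq_zero [FiniteDimensional ℝ E]
    (hE : 2 ≤ Module.finrank ℝ E) (η : E) : ∃ y : E, ‖y‖ = 1 ∧ ⟪η, y⟫ = 0 := by
  have hK : (ℝ ∙ η)ᗮ ≠ ⊥ := by
    intro hbot
    have hsum := (ℝ ∙ η).finrank_add_finrank_orthogonal
    rw [hbot, finrank_bot] at hsum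
    have hline : Module.finrank ℝ (ℝ ∙ η) ≤ 1 := by
      simpa using finrank_span_le_card ({η} : Set E)
    omega
  obtain ⟨y, hy, hy0⟩ := Submodule.exists_mem_ne_zero_of_ne_bot hK
  refine ⟨‖y‖⁻¹ • y, norm_smul_inv_norm hy0, ?_⟩
  rw [inner_smul_right, Submodule.mem_orthogonal_singleton_iff_inner_right.mp hy, mul_zero]

theorem norm_smul_add_smul_eq_one {e y : E} (he : ‖e‖ = 1) (hy : ‖y‖ = 1) (hey : ⟪e, y⟫ = 0)
    {s c : ℝ} (hsc : s ^ 2 + c ^ 2 = 1) : ‖s • e + c • y‖ = 1 := by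
  have h := norm_add_sq_eq_norm_sq_add_norm_sq_real
    (x := s • e) (y := c • y) (by simp [inner_smul_left, inner_smul_right, hey])
  rw [norm_smul, norm_smul, he, hy, Real.norm_eq_abs, Real.norm_eq_abs] at h
  have h1 : ‖s • e + c • y‖ ^ 2 = 1 := by nlinarith [sq_abs s, sq_abs c]
  exact (pow_eq_one_iff_of_nonneg (norm_nonneg _) two_ne_zero).mp h1

theorem inner_eq_zero_of_inner_smul_add_smul_eq_zero {e y w : E} {s c : ℝ} (hs : s ≠ 0)
    (hc : c ≠ 0) (hplus : ⟪s • e + c • y, w⟫ = 0) (hminus : ⟪(-s) • e + c • y, w⟫ = 0) :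
    ⟪e, w⟫ = 0 ∧ ⟪y, w⟫ = 0 := by
  simp only [inner_add_left, inner_smul_left, RCLike.conj_to_real] at hplus hminus
  have he : s * ⟪e, w⟫ = 0 := by linear_combination (hplus - hminus) / 2
  have hy : c * ⟪y, w⟫ = 0 := by linear_combination (hplus + hminus) / 2
  exact ⟨(mul_eq_zero.mp he).resolve_left hs, (mul_eq_zero.mp hy).resolve_left hc⟩

theorem LinearMap.apply_eq_zero_of_eigenvector_smul_add_smul {T : E →ₗ[ℝ] E} {e y : E}
    {s c μ : ℝ} (he : ‖e‖ = 1) (hey : ⟪e, y⟫ = 0) (hs : s ≠ 0) (hc : c ≠ 0) (hTe : T e = 0)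
    (hTy : T y = μ • y)
    (hT : T (s • e + c • y) = ⟪s • e + c • y, T (s • e + c • y)⟫ • (s • e + c • y)) :
    T y = 0 := by
  have hee : ⟪e, e⟫ = 1 := by rw [real_inner_self_eq_norm_sq, he, one_pow]
  rw [map_add, map_smul, map_smul, hTe, hTy, smul_zero, zero_add, smul_smul] at hT
  have h := congrArg (fun v => ⟪e, v⟫) hT
  simp only [inner_smul_right, inner_add_right, inner_add_left, inner_smul_left, hey, hee,
    RCLike.conj_to_real] at h
  have hμ : μ * ⟪y, y⟫ = 0 := by
    have : c ^ 2 * s * (μ * ⟪y, y⟫) = 0 := by linear_combination -h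
    exact (mul_eq_zero.mp this).resolve_left (by positivity)
  rcases mul_eq_zero.mp hμ with hμ | hy
  · rw [hTy, hμ, zero_smul]
  · rw [inner_self_eq_zero.mp hy, map_zero]

end InnerProductSpace

theorem exists_pos_sq_add_sq_eq_one {δ : ℝ} (hδ : 0 < δ) :
    ∃ s c : ℝ, 0 < s ∧ s < δ ∧ 0 < c ∧ s ^ 2 + c ^ 2 = 1 := by
  set s := min (δ / 2) (1 / 2)
  have hs : 0 < s := lt_min (by positivity) (by norm_num)
  have hs1 : s ≤ 1 / 2 := min_le_right _ _
  refine ⟨s, √(1 - s ^ 2), hs, (min_le_left _ _).trans_lt (by linarith), ?_, ?_⟩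
  · exact Real.sqrt_pos.mpr (by nlinarith)
  · rw [Real.sq_sqrt (by nlinarith)]; ring

theorem Matrix.trace_toLpLin {n R : Type*} [Fintype n] [DecidableEq n] [CommRing R]
    (p : ENNReal) (A : Matrix n n R) : LinearMap.trace R _ (Matrix.toLpLin p p A) = A.trace := by
  rw [LinearMap.trace_eq_matrix_trace R (PiLp.basisFun p R n), Matrix.toLpLin_eq_toLin,
    LinearMap.toMatrix_toLin]

section Kernel

variable {m : ℕ} {a ξ ε : ℝ} {u w e : EuclideanSpace ℝ (Fin m)}
  {A : Matrix (Fin m) (Fin m) ℝ}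

theorem mulE_eq_toLpLin (Y : EuclideanSpace ℝ (Fin m)) :
    mulE A Y = Matrix.toLpLin 2 2 A Y :=
  rfl

theorem Matrix.eq_zero_of_trace_eq_zero_of_forall_mulE_eq_smul (htr : A.trace = 0)
    (h : ∀ Y, ‖Y‖ = 1 → mulE A Y = ⟪Y, mulE A Y⟫ • Y) : A = 0 := by
  obtain ⟨c, hc⟩ := LinearMap.exists_eq_smul_id_of_forall_notLinearIndependent
    (f := Matrix.toLpLin 2 2 A) fun v => by
      rw [LinearIndependent.pair_iff]
      push Not
      rcases eq_or_ne v 0 with rfl | hv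
      · exact ⟨1, 0, by simp, by simp⟩
      have hunit := h (‖v‖⁻¹ • v) (norm_smul_inv_norm hv)
      rw [mulE_eq_toLpLin, map_smul, smul_comm] at hunit
      obtain ⟨μ, hAv⟩ : ∃ μ : ℝ, Matrix.toLpLin 2 2 A v = μ • v :=
        ⟨_, smul_right_injective _ (inv_ne_zero (norm_ne_zero_iff.mpr hv)) hunit⟩
      exact ⟨μ, -1, by rw [hAv, neg_one_smul, add_neg_cancel], by simp⟩
  rcases Nat.eq_zero_or_pos m with rfl | hm
  · exact Subsingleton.elim _ _
  have hcm : c * m = 0 := by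
    rw [← htr, ← Matrix.trace_toLpLin, hc]
    simp
  have hc0 : c = 0 := (mul_eq_zero.mp hcm).resolve_right (by positivity)
  exact (Matrix.toLpLin 2 2).injective (by rw [hc, hc0, zero_smul, map_zero])

-- Reduced form of the two symbol equations (iii) at a point `(S, Y)` with `‖Y‖ = 1`.
structure ReducedKernelEqns (a : ℝ) (u w : EuclideanSpace ℝ (Fin m))
    (A : Matrix (Fin m) (Fin m) ℝ) (S : ℝ) (Y : EuclideanSpace ℝ (Fin m)) : Prop where
  smul_inner_w : S * ⟪Y, w⟫ = 0
  inner_u : ⟪Y, u⟫ = S * (⟪Y, mulE A Y⟫ - a)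
  mulE_add_smul : mulE A Y + S • w = ⟪Y, mulE A Y⟫ • Y

theorem ReducedKernelEqns.of_symbol {S : ℝ} {Y : EuclideanSpace ℝ (Fin m)} (hY : ‖Y‖ = 1)
    (hscalar : S * a + ⟪Y, u⟫ - S ^ 2 * ⟪Y, w⟫ - S * ⟪Y, mulE A Y⟫ = 0)
    (hvector : (-(S ^ 2 * a)) • Y - (S * (⟪Y, u⟫ + ⟪Y, w⟫)) • Y + S • w + mulE A Y
        + ((S ^ 2 - 1) * ⟪Y, mulE A Y⟫) • Y = 0) :
    ReducedKernelEqns a u w A S Y := by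
  have hYY : ⟪Y, Y⟫ = 1 := by rw [real_inner_self_eq_norm_sq, hY, one_pow]
  have hradial := congrArg (fun v => ⟪Y, v⟫) hvector
  simp only [inner_add_right, inner_sub_right, inner_smul_right, hYY, inner_zero_right] at hradial
  have hcube : (S * ⟪Y, w⟫) ^ 3 = 0 := by
    linear_combination ⟪Y, w⟫ ^ 2 * (-hradial - S * hscalar)
  have hw := pow_eq_zero_iff three_ne_zero |>.mp hcube
  have hu : ⟪Y, u⟫ = S * (⟪Y, mulE A Y⟫ - a) := by linear_combination hscalar + S * hw
  exact ⟨hw, hu, by linear_combination (norm := module) hvector + (S * hu + hw) • Y⟩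

theorem eq_zero_of_reducedKernelEqns_of_forall_abs_lt (hm : 2 ≤ m) (he : ‖e‖ = 1)
    (hε : 0 < ε) (htrace : a + A.trace = 0) (hAe : mulE A e = 0)
    (h : ∀ S, |S| < ε → ∀ Y, ‖Y‖ = 1 → ⟪e, Y⟫ = 0 → ReducedKernelEqns a u w A S Y) :
    a = 0 ∧ w = 0 ∧ A = 0 := by
  have hδ : |ε / 2| < ε := by rw [abs_of_pos (half_pos hε)]; linarith
  have hδ' : |-(ε / 2)| < ε := by rwa [abs_neg]
  have h0 : |(0 : ℝ)| < ε := by simpa using hε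
  obtain ⟨Y0, hY0, heY0⟩ := exists_norm_eq_one_inner_eq_zero (by simpa using hm) e
  have hw : w = 0 := by
    have h1 := (h _ hδ Y0 hY0 heY0).mulE_add_smul
    have h2 := (h 0 h0 Y0 hY0 heY0).mulE_add_smul
    have : (ε / 2) • w = 0 := by linear_combination (norm := module) h1 - h2
    exact (smul_eq_zero.mp this).resolve_left (by positivity)
  have heigen : ∀ Y, ‖Y‖ = 1 → ⟪e, Y⟫ = 0 → mulE A Y = a • Y := by
    intro Y hY heY
    have h1 := (h _ hδ Y hY heY).inner_u
    have h2 := (h _ hδ' Y hY heY).inner_u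
    have hmean : ε * (⟪Y, mulE A Y⟫ - a) = 0 := by linear_combination h2 - h1
    have h3 := (h 0 h0 Y hY heY).mulE_add_smul
    rw [zero_smul, add_zero] at h3
    rw [h3, sub_eq_zero.mp ((mul_eq_zero.mp hmean).resolve_left hε.ne')]
  have hee : ⟪e, e⟫ = 1 := by rw [real_inner_self_eq_norm_sq, he, one_pow]
  have hlin : Matrix.toLpLin 2 2 A = a • (LinearMap.id - (rankOne ℝ e e).toLinearMap) := by
    refine LinearMap.ext_of_unit_orthogonal (η := e) ?_ fun Y hY heY => ?_
    · simpa [he, mulE_eq_toLpLin] using hAe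
    · simpa [heY, mulE_eq_toLpLin] using heigen Y hY heY
  have ha : a = 0 := by
    rw [← Matrix.trace_toLpLin, hlin] at htrace
    simp only [map_smul, map_sub, LinearMap.trace_id, trace_rankOne, hee, smul_eq_mul,
      finrank_euclideanSpace_fin] at htrace
    have ham : a * m = 0 := by linear_combination htrace
    exact (mul_eq_zero.mp ham).resolve_right (Nat.cast_ne_zero.mpr (by omega))
  exact ⟨ha, hw, (Matrix.toLpLin 2 2).injective (by rw [hlin, ha, zero_smul, map_zero])⟩

theorem eq_zero_of_reducedKernelEqns_of_ne_zero (hm : 2 ≤ m) (hξ : ξ ≠ 0) (he : ‖e‖ = 1)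
    (hε : 0 < ε) (htrace : a + A.trace = 0) (hgauge2 : ξ • w + mulE A e = 0)
    (h : ∀ S, |S| < ε → ∀ Y, ‖Y‖ = 1 → ξ * S + ⟪e, Y⟫ = 0 → ReducedKernelEqns a u w A S Y) :
    a = 0 ∧ w = 0 ∧ A = 0 := by
  obtain ⟨s, c, hs, hsε, hc, hsc⟩ := exists_pos_sq_add_sq_eq_one (mul_pos (abs_pos.mpr hξ) hε)
  have htilt : ∀ Y0, ‖Y0‖ = 1 → ⟪e, Y0⟫ = 0 → ∀ σ, |σ| = s →
      ReducedKernelEqns a u w A (-σ / ξ) (σ • e + c • Y0) := by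
    intro Y0 hY0 heY0 σ hσ
    refine h _ ?_ _ (norm_smul_add_smul_eq_one he hY0 heY0 (by rw [← sq_abs, hσ, hsc])) ?_
    · rwa [abs_div, abs_neg, hσ, div_lt_iff₀ (abs_pos.mpr hξ), mul_comm]
    · simp [inner_add_right, inner_smul_right, heY0, he]
      field_simp
      ring
  have hequator : ∀ Y0, ‖Y0‖ = 1 → ⟪e, Y0⟫ = 0 → ReducedKernelEqns a u w A 0 Y0 :=
    fun Y0 hY0 heY0 => h 0 (by simpa) Y0 hY0 (by simp [heY0])
  have hw : w = 0 := by
    have hinner : ∀ Y0, ‖Y0‖ = 1 → ⟪e, Y0⟫ = 0 → ⟪e, w⟫ = 0 ∧ ⟪Y0, w⟫ = 0 := by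
      intro Y0 hY0 heY0
      have hplus := (htilt Y0 hY0 heY0 s (abs_of_pos hs)).smul_inner_w
      have hminus := (htilt Y0 hY0 heY0 (-s) (by rw [abs_neg, abs_of_pos hs])).smul_inner_w
      exact inner_eq_zero_of_inner_smul_add_smul_eq_zero hs.ne' hc.ne'
        ((mul_eq_zero.mp hplus).resolve_left (by simp [hs.ne', hξ]))
        ((mul_eq_zero.mp hminus).resolve_left (by simp [hs.ne', hξ]))
    obtain ⟨Y0, hY0, heY0⟩ := exists_norm_eq_one_inner_eq_zero (by simpa using hm) e
    exact eq_zero_of_inner_eq_zero_of_unit_orthogonal (hinner Y0 hY0 heY0).1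
      fun Y hY heY => (hinner Y hY heY).2
  have hAe : mulE A e = 0 := by simpa [hw] using hgauge2
  have hA : A = 0 := by
    refine (Matrix.toLpLin 2 2).injective (LinearMap.ext_of_unit_orthogonal (η := e)
      (by simpa [mulE_eq_toLpLin] using hAe) fun Y0 hY0 heY0 => ?_)
    have htilted := (htilt Y0 hY0 heY0 s (abs_of_pos hs)).mulE_add_smul
    rw [hw, smul_zero, add_zero] at htilted
    have heigen := (hequator Y0 hY0 heY0).mulE_add_smul
    rw [zero_smul, add_zero] at heigen
    simpa using LinearMap.apply_eq_zero_of_eigenvector_smul_add_smul he heY0 hs.ne' hc.ne' hAe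
      heigen htilted
  exact ⟨by simpa [hA] using htrace, hw, hA⟩

theorem eq_zero_of_reducedKernelEqns (hm : 2 ≤ m) (he : ‖e‖ = 1) (hε : 0 < ε)
    (htrace : a + A.trace = 0) (hgauge2 : ξ • w + mulE A e = 0)
    (h : ∀ S, |S| < ε → ∀ Y, ‖Y‖ = 1 → ξ * S + ⟪e, Y⟫ = 0 → ReducedKernelEqns a u w A S Y) :
    a = 0 ∧ w = 0 ∧ A = 0 := by
  rcases eq_or_ne ξ 0 with rfl | hξ
  · exact eq_zero_of_reducedKernelEqns_of_forall_abs_lt hm he hε htrace (by simpa using hgauge2)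
      fun S hS Y hY heY => h S hS Y hY (by simp [heY])
  · exact eq_zero_of_reducedKernelEqns_of_ne_zero hm hξ he hε htrace hgauge2 h

end Kernel

theorem stmt_4 (n : ℕ) (hn : 3 ≤ n)
    (ξ : ℝ) (η : EuclideanSpace ℝ (Fin (n - 1)))
    (hξη : ¬(ξ = 0 ∧ η = 0))
    (ε : ℝ) (hε : 0 < ε)
    (a : ℝ) (u w : EuclideanSpace ℝ (Fin (n - 1)))
    (A : Matrix (Fin (n - 1)) (Fin (n - 1)) ℝ)
    (htrace : a + A.trace = 0)
    (hgauge1 : ξ * a + ⟪η, u⟫ = 0)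
    (hgauge2 : ξ • w + mulE A η = 0)
    (h : ∀ S : ℝ, |S| < ε → ∀ Y : EuclideanSpace ℝ (Fin (n - 1)), ‖Y‖ = 1 →
      ξ * S + ⟪η, Y⟫ = 0 →
      S * a + ⟪Y, u⟫ - S ^ 2 * ⟪Y, w⟫ - S * ⟪Y, mulE A Y⟫ = 0 ∧
      (-(S ^ 2 * a)) • Y - (S * (⟪Y, u⟫ + ⟪Y, w⟫)) • Y + S • w + mulE A Y
        + ((S ^ 2 - 1) * ⟪Y, mulE A Y⟫) • Y = 0) :
    a = 0 ∧ u = 0 ∧ w = 0 ∧ A = 0 := by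
  have hred : ∀ S, |S| < ε → ∀ Y, ‖Y‖ = 1 → ξ * S + ⟪η, Y⟫ = 0 →
      ReducedKernelEqns a u w A S Y :=
    fun S hS Y hY hSY => (h S hS Y hY hSY).elim (ReducedKernelEqns.of_symbol hY)
  have hequator : ∀ Y, ‖Y‖ = 1 → ⟪η, Y⟫ = 0 → ReducedKernelEqns a u w A 0 Y :=
    fun Y hY hηY => hred 0 (by simpa) Y hY (by simp [hηY])
  obtain ⟨ha, hw, hA⟩ : a = 0 ∧ w = 0 ∧ A = 0 := by
    rcases eq_or_ne η 0 with rfl | hη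
    · have hξ : ξ ≠ 0 := fun hξ => hξη ⟨hξ, rfl⟩
      have ha : a = 0 := by simpa [hξ] using hgauge1
      refine ⟨ha, by simpa [hξ, mulE_eq_toLpLin] using hgauge2, ?_⟩
      exact Matrix.eq_zero_of_trace_eq_zero_of_forall_mulE_eq_smul (by linarith)
        fun Y hY => by simpa using (hequator Y hY (inner_zero_left _)).mulE_add_smul
    · -- the equations are homogeneous in `(ξ, η)`, so `η` may be normalized
      have hr : ‖η‖⁻¹ ≠ 0 := inv_ne_zero (norm_ne_zero_iff.mpr hη)
      refine eq_zero_of_reducedKernelEqns (ξ := ‖η‖⁻¹ * ξ) (by omega)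
        (norm_smul_inv_norm (𝕜 := ℝ) hη) hε htrace ?_ fun S hS Y hY hSY => hred S hS Y hY ?_
      · simpa [mulE_eq_toLpLin, mul_smul] using congrArg (‖η‖⁻¹ • ·) hgauge2
      · have hscaled : ‖η‖⁻¹ * (ξ * S + ⟪η, Y⟫) = 0 := by
          rw [mul_add, ← mul_assoc, ← real_inner_smul_left]
          exact hSY
        exact (mul_eq_zero.mp hscaled).resolve_left hr
  have hu : u = 0 := eq_zero_of_inner_eq_zero_of_unit_orthogonal (by simpa [ha] using hgauge1)
    fun Y hY hηY => by simpa using (hequator Y hY hηY).inner_u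
  exact ⟨ha, hu, hw, hA⟩
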